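/- Let (E, C) be a finitely separated graph with a branching vertex v and suppose there exist cycles α = δγ and β = εγ based at v with γ = α ∧ β a proper initial subpath of both, such that β·α⁻¹ = εδ⁻¹ and βα are also cycles. Then v does not admit a local orientation, i.e. neither of the following holds: (1) there is X_v ∈ C_v such that every base-simple closed path at v has initial symbol in X_v⁻¹ or terminal symbol in X_v; (2) there is e_v ∈ s⁻¹(v) such that every base-simple closed path at v has initial symbol e_v or terminal symbol e_v⁻¹. -/

import Mathlib

/-!
Let `S` be the set of letters through which the base-simple closed paths at `v` leave `v`
(the inverses of the edges in `X_v` for (1), `e_v` for (2)), so that each of them leaves through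
`S` or returns through `S⁻¹`. Admissibility forbids returning through `S⁻¹` and leaving again
at once through `S`, so cutting a closed path at its returns to `v` shows that every closed path
at `v` leaves through `S` or returns through `S⁻¹`; going around a cycle shows that it does
exactly one of the two. For the cycles `γδ`, `γδγε` and `δ⁻¹ε` this relates pairwise by
"exclusive or" the three statements `a ∈ S`, `d⁻¹ ∈ S`, `e⁻¹ ∈ S`, where `a` is the first letter
of `γδ` and `d`, `e` are the last letters of `δ`, `ε`: impossible for three statements.
-/

namespace SepGraphStmt

/-- A finitely separated graph: a directed graph with a colouring of the edges
such that edges of the same colour have the same range, and each colour class is finite.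
(The colour classes with range `v` form the partition `C_v` of `r⁻¹(v)`.) -/
structure SepGraph (V E Λ : Type) where
  r : E → V
  s : E → V
  col : E → Λ
  col_range : ∀ e f, col e = col f → r e = r f
  col_finite : ∀ l : Λ, {e : E | col e = l}.Finite

variable {V E Λ : Type}

/-- A letter of the double graph: an edge together with a direction
(`true` = the edge itself, `false` = its formal inverse). -/
abbrev Letter (E : Type) := E × Bool

def src (G : SepGraph V E Λ) (a : Letter E) : V :=
  if a.2 then G.s a.1 else G.r a.1

def rng (G : SepGraph V E Λ) (a : Letter E) : V :=
  if a.2 then G.r a.1 else G.s a.1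

/-- Letter `b` may follow letter `a` in an admissible path
(words are written in application order: the first letter of a list is traversed first). -/
def ok (G : SepGraph V E Λ) (a b : Letter E) : Prop :=
  src G b = rng G a ∧
    (a.2 = false → b.2 = true → b.1 ≠ a.1) ∧
    (a.2 = true → b.2 = false → G.col b.1 ≠ G.col a.1)

def Admissible (G : SepGraph V E Λ) (w : List (Letter E)) : Prop :=
  List.Chain' (ok G) w

/-- Formal inverse of a word. -/
def wInv (w : List (Letter E)) : List (Letter E) :=
  (w.map fun a => (a.1, !a.2)).reverse

/-- The source of the (nonempty) word is `v`. -/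
def headIs (G : SepGraph V E Λ) (w : List (Letter E)) (v : V) : Prop :=
  ∀ a ∈ w.head?, src G a = v

/-- The range of the (nonempty) word is `v`. -/
def lastIs (G : SepGraph V E Λ) (w : List (Letter E)) (v : V) : Prop :=
  ∀ a ∈ w.getLast?, rng G a = v

/-- `w` is an admissible path from `u` to `v`. -/
def IsPath (G : SepGraph V E Λ) (w : List (Letter E)) (u v : V) : Prop :=
  Admissible G w ∧ (w = [] → u = v) ∧ headIs G w u ∧ lastIs G w v

/-- `w` is a closed path based at `v`. -/
def IsClosed (G : SepGraph V E Λ) (w : List (Letter E)) (v : V) : Prop :=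
  w ≠ [] ∧ Admissible G w ∧ headIs G w v ∧ lastIs G w v

/-- `w` is a cycle: a nontrivial path whose square is admissible. -/
def IsCycle (G : SepGraph V E Λ) (w : List (Letter E)) : Prop :=
  w ≠ [] ∧ Admissible G (w ++ w)

/-- `w` is a cycle based at `v`. -/
def CycleAt (G : SepGraph V E Λ) (w : List (Letter E)) (v : V) : Prop :=
  IsCycle G w ∧ headIs G w v

/-- A nontrivial admissible path `w` allows a return: some `βw` is a closed path. -/
def AllowsReturn (G : SepGraph V E Λ) (w : List (Letter E)) : Prop :=
  w ≠ [] ∧ Admissible G w ∧ ∃ b u, IsClosed G (w ++ b) u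

/-- A "returning item" at `v`: either an edge in `s⁻¹(v)` allowing a return,
or a colour class `X ∈ C_v` allowing a return. -/
def RetItem (G : SepGraph V E Λ) (v : V) : E ⊕ Λ → Prop
  | Sum.inl e => G.s e = v ∧ AllowsReturn G [(e, true)]
  | Sum.inr l => ∃ e, G.col e = l ∧ G.r e = v ∧ AllowsReturn G [(e, false)]

/-- `v` is a branching vertex. -/
def Branching (G : SepGraph V E Λ) (v : V) : Prop :=
  ∃ x y z : E ⊕ Λ, x ≠ y ∧ x ≠ z ∧ y ≠ z ∧
    RetItem G v x ∧ RetItem G v y ∧ RetItem G v z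

/-- The relation `u ⊸ v`: there is an admissible path `α : u → v` and a cycle `β`
based at `v` such that `α⁻¹βα` is admissible. -/
def Multimap (G : SepGraph V E Λ) (u v : V) : Prop :=
  ∃ α β, IsPath G α u v ∧ CycleAt G β v ∧ Admissible G (α ++ β ++ wInv α)

/-- A word is positively oriented w.r.t. an orientation `o`. -/
def Pos (o : E → Bool) (w : List (Letter E)) : Prop := ∀ a ∈ w, a.2 = o a.1

/-- A word is negatively oriented w.r.t. an orientation `o`. -/
def Neg (o : E → Bool) (w : List (Letter E)) : Prop := ∀ a ∈ w, a.2 = !o a.1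

/-- `o` is an orientation at `v` (Definition of orientation, with (2')). -/
def OrientAt (G : SepGraph V E Λ) (o : E → Bool) (v : V) : Prop :=
  ((∃ l : Λ, (∃ e, G.col e = l) ∧ (∀ e, (G.r e = v ∧ o e = false) ↔ G.col e = l)) ∧
    ∀ e, G.s e = v → o e = false) ∨
  ((∀ e, G.r e = v → o e = true) ∧
    ∀ e f, G.s e = v → G.s f = v → o e = true → o f = true → e = f)

/-- `o` is a proper orientation at `v`. -/
def ProperOrientAt (G : SepGraph V E Λ) (o : E → Bool) (v : V) : Prop :=
  ((∃ l : Λ, (∃ e, G.col e = l) ∧ (∀ e, (G.r e = v ∧ o e = false) ↔ G.col e = l)) ∧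
    ∀ e, G.s e = v → o e = false) ∨
  ((∀ e, G.r e = v → o e = true) ∧ ∃! e, G.s e = v ∧ o e = true)

/-- `w` is a base-simple closed path at `v`. -/
def BaseSimple (G : SepGraph V E Λ) (w : List (Letter E)) (v : V) : Prop :=
  IsClosed G w v ∧
    ∀ p, p ≠ [] → p.length < w.length → p <+: w → ¬ lastIs G p v

def Letter.inv (a : Letter E) : Letter E := (a.1, !a.2)

def LeavesOrReturnsThrough (S : Set (Letter E)) (w : List (Letter E)) : Prop :=
  (∃ a ∈ w.head?, a ∈ S) ∨ ∃ a ∈ w.getLast?, a.inv ∈ S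

section

variable {G : SepGraph V E Λ} {v : V} {w p r : List (Letter E)}

lemma wInv_head? (w : List (Letter E)) : (wInv w).head? = w.getLast?.map Letter.inv := by
  simp only [wInv, List.head?_reverse, List.getLast?_map]
  rfl

lemma CycleAt.ok_getLast_head (h : CycleAt G w v) :
    ∀ a ∈ w.getLast?, ∀ b ∈ w.head?, ok G a b :=
  (List.isChain_append.mp h.1.2).2.2

lemma CycleAt.isClosed (h : CycleAt G w v) : IsClosed G w v := by
  have hb := List.head?_eq_some_head h.1.1
  refine ⟨h.1.1, h.1.2.prefix (List.prefix_append w w), h.2, fun a ha => ?_⟩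
  rw [← (h.ok_getLast_head a ha _ hb).1]
  exact h.2 _ hb

lemma IsClosed.left_of_append (hw : IsClosed G (p ++ r) v) (hp : p ≠ [])
    (hpv : lastIs G p v) : IsClosed G p v := by
  obtain ⟨-, hadm, hhead, -⟩ := hw
  refine ⟨hp, hadm.prefix (List.prefix_append p r), fun a ha => hhead a ?_, hpv⟩
  simp [Option.mem_def.mp ha]

lemma IsClosed.right_of_append (hw : IsClosed G (p ++ r) v) (hr : r ≠ [])
    (hpv : lastIs G p v) : IsClosed G r v := by
  obtain ⟨-, hadm, hhead, hlast⟩ := hw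
  refine ⟨hr, hadm.suffix (List.suffix_append p r), fun b hb => ?_, fun a ha => hlast a ?_⟩
  · rcases p.eq_nil_or_concat' with rfl | ⟨p', a, rfl⟩
    · exact hhead b hb
    · have hok := (List.isChain_append.mp hadm).2.2 a (by simp) b hb
      rw [hok.1]
      exact hpv a (by simp)
  · simp [Option.mem_def.mp ha]

lemma IsClosed.exists_baseSimple_prefix (hw : IsClosed G w v) :
    ∃ p r, w = p ++ r ∧ BaseSimple G p v ∧ (r ≠ [] → IsClosed G r v) := by
  classical
  have hex : ∃ k, 0 < k ∧ lastIs G (w.take k) v :=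
    ⟨w.length, List.length_pos_iff.mpr hw.1, by simpa using hw.2.2.2⟩
  obtain ⟨hpos, hlast⟩ := Nat.find_spec hex
  set n := Nat.find hex
  have hw' : IsClosed G (w.take n ++ w.drop n) v := by rwa [List.take_append_drop]
  have hp : w.take n ≠ [] := by simpa [Nat.pos_iff_ne_zero.mp hpos] using hw.1
  refine ⟨w.take n, w.drop n, (List.take_append_drop n w).symm,
    ⟨hw'.left_of_append hp hlast, fun q hq hlt hpre hqv => ?_⟩,
    fun hr => hw'.right_of_append hr hlast⟩
  have hqw : q = w.take q.length := List.prefix_iff_eq_take.mp (hpre.trans (w.take_prefix n))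
  refine Nat.find_min hex (m := q.length) ?_ ⟨List.length_pos_iff.mpr hq, hqw ▸ hqv⟩
  exact hlt.trans_le (List.length_take_le n w)

variable {S : Set (Letter E)}

lemma LeavesOrReturnsThrough.append (hS : ∀ a b, a.inv ∈ S → b ∈ S → ¬ ok G a b)
    (hadm : Admissible G (p ++ r)) (hp : LeavesOrReturnsThrough S p)
    (hr : LeavesOrReturnsThrough S r) : LeavesOrReturnsThrough S (p ++ r) := by
  rcases hp with ⟨a, ha, haS⟩ | ⟨a, ha, haS⟩
  · exact .inl ⟨a, by simp [Option.mem_def.mp ha], haS⟩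
  rcases hr with ⟨b, hb, hbS⟩ | ⟨b, hb, hbS⟩
  · exact (hS a b haS hbS ((List.isChain_append.mp hadm).2.2 a ha b hb)).elim
  · exact .inr ⟨b, by simp [Option.mem_def.mp hb], hbS⟩

lemma IsClosed.leavesOrReturnsThrough (hS : ∀ a b, a.inv ∈ S → b ∈ S → ¬ ok G a b)
    (hbs : ∀ w, BaseSimple G w v → LeavesOrReturnsThrough S w) (hw : IsClosed G w v) :
    LeavesOrReturnsThrough S w := by
  induction hn : w.length using Nat.strong_induction_on generalizing w with
  | _ n ih =>
  obtain ⟨p, r, rfl, hp, hr⟩ := hw.exists_baseSimple_prefix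
  rcases eq_or_ne r [] with rfl | hr'
  · simpa using hbs p hp
  · refine (hbs p hp).append hS hw.2.1 (ih r.length ?_ (hr hr') rfl)
    simp [← hn, List.length_pos_iff.mpr hp.1.1]

lemma CycleAt.xor_mem (hS : ∀ a b, a.inv ∈ S → b ∈ S → ¬ ok G a b)
    (hbs : ∀ w, BaseSimple G w v → LeavesOrReturnsThrough S w) (hw : CycleAt G w v)
    {a b : Letter E} (ha : a ∈ w.head?) (hb : b ∈ w.getLast?) : Xor (a ∈ S) (b.inv ∈ S) := by
  have hseam := fun hbS haS => hS b a hbS haS (hw.ok_getLast_head b hb a ha)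
  rcases hw.isClosed.leavesOrReturnsThrough hS hbs with ⟨a', ha', haS⟩ | ⟨b', hb', hbS⟩
  · cases Option.mem_unique ha ha'
    exact .inl ⟨haS, fun hbS => hseam hbS haS⟩
  · cases Option.mem_unique hb hb'
    exact .inr ⟨hbS, hseam hbS⟩

theorem not_forall_baseSimple_leavesOrReturnsThrough
    (hS : ∀ a b, a.inv ∈ S → b ∈ S → ¬ ok G a b) {γ δ ε : List (Letter E)}
    (hδ : δ ≠ []) (hε : ε ≠ []) (hα : CycleAt G (γ ++ δ) v)
    (hc : CycleAt G (wInv δ ++ ε) v) (hβα : CycleAt G (γ ++ δ ++ γ ++ ε) v) :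
    ¬ ∀ w, BaseSimple G w v → LeavesOrReturnsThrough S w := by
  intro hbs
  obtain ⟨a, ha⟩ : ∃ a, (γ ++ δ).head? = some a :=
    ⟨_, List.head?_eq_some_head (by simp [hδ])⟩
  obtain ⟨d, hd⟩ : ∃ d, δ.getLast? = some d := ⟨_, List.getLast?_eq_some_getLast hδ⟩
  obtain ⟨e, he⟩ : ∃ e, ε.getLast? = some e := ⟨_, List.getLast?_eq_some_getLast hε⟩
  have hxα := hα.xor_mem hS hbs ha (b := d) (by simp [hd])
  have hxβα := hβα.xor_mem hS hbs (a := a)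
    (by rw [List.append_assoc, List.head?_append, ha]; rfl) (b := e) (by simp [he])
  have hxc := hc.xor_mem hS hbs (a := d.inv) (by simp [wInv_head?, hd]) (b := e) (by simp [he])
  simp only [Xor] at hxα hxβα hxc
  tauto

end

theorem stmt19_general {V E Λ : Type} (G : SepGraph V E Λ) (v : V)
    (γ δ ε : List (Letter E)) (hδ : δ ≠ []) (hε : ε ≠ [])
    (hα : CycleAt G (γ ++ δ) v)
    (hba : CycleAt G (wInv δ ++ ε) v)
    (hβα : CycleAt G (γ ++ δ ++ γ ++ ε) v) :
    ¬ ((∃ X : Λ, (∃ e, G.col e = X ∧ G.r e = v) ∧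
          ∀ w : List (Letter E), BaseSimple G w v →
            (∃ e, w.head? = some (e, false) ∧ G.col e = X) ∨
            (∃ e, w.getLast? = some (e, true) ∧ G.col e = X)) ∨
       (∃ ev : E, G.s ev = v ∧
          ∀ w : List (Letter E), BaseSimple G w v →
            w.head? = some (ev, true) ∨ w.getLast? = some (ev, false))) := by
  rintro (⟨X, -, hall⟩ | ⟨ev, -, hall⟩)
  · refine not_forall_baseSimple_leavesOrReturnsThrough (S := {a | a.2 = false ∧ G.col a.1 = X})
      (fun a b ha hb hok => hok.2.2 ?_ hb.1 (hb.2.trans ha.2.symm)) hδ hε hα hba hβα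
      fun w hw => ?_
    · simpa [Letter.inv] using ha.1
    · rcases hall w hw with ⟨e, he, hX⟩ | ⟨e, he, hX⟩
      · exact .inl ⟨(e, false), he, rfl, hX⟩
      · exact .inr ⟨(e, true), he, rfl, hX⟩
  · refine not_forall_baseSimple_leavesOrReturnsThrough (S := {(ev, true)})
      (fun a b ha hb hok => ?_) hδ hε hα hba hβα fun w hw => ?_
    · obtain ⟨rfl, ha₂⟩ : a.1 = ev ∧ a.2 = false := by simpa [Letter.inv] using ha
      exact hok.2.1 ha₂ (by rw [hb]) (by rw [hb])
    · rcases hall w hw with h | h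
      · exact .inl ⟨_, h, rfl⟩
      · exact .inr ⟨_, h, rfl⟩

/-- If at a branching vertex `v` there are cycles `α = δγ`, `β = εγ`
with `γ = α ∧ β` a proper initial subpath of both such that `εδ⁻¹` and `βα` are also
cycles, then `v` admits no local orientation (neither of type (1) nor of type (2)). -/
theorem stmt19 {V E Λ : Type} (G : SepGraph V E Λ) (v : V) (hv : Branching G v)
    (γ δ ε : List (Letter E)) (hδ : δ ≠ []) (hε : ε ≠ [])
    (hmax : δ.head? ≠ ε.head?)
    (hα : CycleAt G (γ ++ δ) v) (hβ : CycleAt G (γ ++ ε) v)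
    (hba : CycleAt G (wInv δ ++ ε) v)
    (hβα : CycleAt G (γ ++ δ ++ γ ++ ε) v) :
    ¬ ((∃ X : Λ, (∃ e, G.col e = X ∧ G.r e = v) ∧
          ∀ w : List (Letter E), BaseSimple G w v →
            (∃ e, w.head? = some (e, false) ∧ G.col e = X) ∨
            (∃ e, w.getLast? = some (e, true) ∧ G.col e = X)) ∨
       (∃ ev : E, G.s ev = v ∧
          ∀ w : List (Letter E), BaseSimple G w v →
            w.head? = some (ev, true) ∨ w.getLast? = some (ev, false))) :=
  stmt19_general G v γ δ ε hδ hε hα hba hβα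

end SepGraphStmt
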